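/- Fix 1 ≤ p < 2 and set α = 2 − p. Let u satisfy Hypothesis B on an open set X ⊆ ℝⁿ. Then u is real-valued (in particular u(x₀) > −∞ for every x₀ ∈ X) and locally Hölder continuous on X with exponent α; quantitatively, if the closed ball of radius 3ρ about x₀ is contained in X and 0 < 3ρ ≤ R < dist(x₀, ∂X), then for all x ≠ y in the closed ball B_ρ(x₀): |u(x) − u(y)|/|x−y|^α ≤ [R^α/((R−ρ)^α − ρ^α)] · (M(u, x₀, R) − u(x₀))/R^α. -/

import Mathlib

/-!
Apply the double monotonicity at `y` to the radii `0 < d = |x − y|` and `ρ < R − ρ`: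
`(M(u,y,d) − u(y)) · ((R−ρ)^α − ρ^α) ≤ (M(u,y,R−ρ) − M(u,y,ρ)) · d^α`.
Since `u(x) ≤ M(u,y,d)`, `u(x₀) ≤ M(u,y,ρ)` and `M(u,y,R−ρ) ≤ M(u,x₀,R)`, this bounds
`u(x) − u(y)` by `(M(u,x₀,R) − u(x₀)) d^α / ((R−ρ)^α − ρ^α)`; swapping `x` and `y` gives the
Hölder estimate. All quantities are finite: ball maxima are `< ∞` because an upper
semicontinuous function attains its maximum on a compact ball, and `u(y) = −∞` would make
the left side of the same inequality (with `d` replaced by any positive radius) infinite.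
-/

open Set Filter Topology

noncomputable section

abbrev EucSp (n : ℕ) := EuclideanSpace ℝ (Fin n)

/-- The ball maximum `M(u, y, t) = sup_{|x − y| ≤ t} u(x)` (so `M(u, y, 0) = u(y)`). -/
def ballSup {n : ℕ} (u : EucSp n → EReal) (y : EucSp n) (t : ℝ) : EReal :=
  sSup (u '' Metric.closedBall y t)

/-- Hypothesis B (for `1 ≤ p < 2`, `α = 2 − p`): `X` is open, `u` is upper
semicontinuous with values in `[−∞, ∞)`, not identically `−∞` on any ball contained
in `X`, the maximum principle holds, and `K_p` double monotonicity holds: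
`(M(u,y,t) − M(u,y,s))/(t^α − s^α)` is nondecreasing in `s` and `t` (stated in
cross-multiplied form in `EReal`). -/
def HypB {n : ℕ} (p : ℝ) (X : Set (EucSp n)) (u : EucSp n → EReal) : Prop :=
  IsOpen X ∧ UpperSemicontinuousOn u X ∧ (∀ x ∈ X, u x < ⊤) ∧
  (∀ y : EucSp n, ∀ r : ℝ, 0 < r → Metric.closedBall y r ⊆ X →
    ∃ x ∈ Metric.closedBall y r, u x ≠ ⊥) ∧
  (∀ y : EucSp n, ∀ t : ℝ, 0 < t → Metric.closedBall y t ⊆ X →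
    ballSup u y t = sSup (u '' Metric.sphere y t)) ∧
  (∀ y ∈ X, ∀ s t s' t' : ℝ, 0 ≤ s → s < t → s ≤ s' → t ≤ t' → s' < t' →
    Metric.closedBall y t' ⊆ X →
    (ballSup u y t - ballSup u y s) * (((t' ^ (2 - p) - s' ^ (2 - p) : ℝ)) : EReal) ≤
      (ballSup u y t' - ballSup u y s') * (((t ^ (2 - p) - s ^ (2 - p) : ℝ)) : EReal))

open Metric

theorem UpperSemicontinuousOn.sSup_image_lt_top {α β : Type*} [TopologicalSpace α]
    [CompleteLinearOrder β] [Nontrivial β] {f : α → β} {K : Set α} (hK : IsCompact K)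
    (hf : UpperSemicontinuousOn f K) (htop : ∀ x ∈ K, f x < ⊤) : sSup (f '' K) < ⊤ := by
  rcases K.eq_empty_or_nonempty with rfl | hne
  · simp
  obtain ⟨a, haK, hmax⟩ := hf.exists_isMaxOn hne hK
  exact (sSup_le (forall_mem_image.2 hmax)).trans_lt (htop a haK)

section ballSup

variable {n : ℕ} (u : EucSp n → EReal)

lemma ballSup_zero (y : EucSp n) : ballSup u y 0 = u y := by
  simp [ballSup, closedBall_zero]

lemma le_ballSup {x y : EucSp n} {t : ℝ} (h : x ∈ closedBall y t) : u x ≤ ballSup u y t :=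
  le_sSup (mem_image_of_mem _ h)

lemma ballSup_le_ballSup_of_subset {y z : EucSp n} {s t : ℝ}
    (h : closedBall y s ⊆ closedBall z t) : ballSup u y s ≤ ballSup u z t :=
  sSup_le_sSup (image_mono h)

end ballSup

namespace HypB

variable {n : ℕ} {p : ℝ} {X : Set (EucSp n)} {u : EucSp n → EReal} {y : EucSp n}

lemma ballSup_lt_top (h : HypB p X u) {r : ℝ} (hsub : closedBall y r ⊆ X) :
    ballSup u y r < ⊤ :=
  (h.2.1.mono hsub).sSup_image_lt_top (isCompact_closedBall y r) fun x hx => h.2.2.1 x (hsub hx)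

lemma ballSup_ne_bot_of_pos (h : HypB p X u) {r : ℝ} (hr : 0 < r)
    (hsub : closedBall y r ⊆ X) : ballSup u y r ≠ ⊥ := by
  obtain ⟨x, hx, hxb⟩ := h.2.2.2.1 y r hr hsub
  exact ne_bot_of_le_ne_bot hxb (le_ballSup u hx)

lemma ne_bot (h : HypB p X u) (hp : p < 2) {x : EucSp n} (hx : x ∈ X) : u x ≠ ⊥ := by
  intro hbot
  obtain ⟨r, hr, hsub⟩ := nhds_basis_closedBall.mem_iff.1 (h.1.mem_nhds hx)
  have hsub' : closedBall x (r / 2) ⊆ X := (closedBall_subset_closedBall (by linarith)).trans hsub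
  have hc : 0 < r ^ (2 - p) - (r / 2) ^ (2 - p) :=
    sub_pos.2 (Real.rpow_lt_rpow (by positivity) (by linarith) (by linarith))
  have hK := h.2.2.2.2.2 x hx 0 r (r / 2) r le_rfl hr (by positivity) le_rfl (by linarith) hsub
  rw [ballSup_zero, hbot, EReal.sub_bot (h.ballSup_ne_bot_of_pos hr hsub),
    EReal.top_mul_coe_of_pos hc,
    ← EReal.coe_toReal (h.ballSup_lt_top hsub).ne (h.ballSup_ne_bot_of_pos hr hsub),
    ← EReal.coe_toReal (h.ballSup_lt_top hsub').ne (h.ballSup_ne_bot_of_pos (by positivity) hsub'),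
    ← EReal.coe_sub, ← EReal.coe_mul] at hK
  exact (EReal.coe_lt_top _).not_ge hK

lemma ballSup_ne_bot (h : HypB p X u) (hp : p < 2) {r : ℝ} (hr : 0 ≤ r)
    (hsub : closedBall y r ⊆ X) : ballSup u y r ≠ ⊥ := by
  rcases hr.eq_or_lt with rfl | hr
  · rw [ballSup_zero]
    exact h.ne_bot hp (hsub (mem_closedBall_self le_rfl))
  · exact h.ballSup_ne_bot_of_pos hr hsub

lemma toReal_ballSup_le_of_subset (h : HypB p X u) (hp : p < 2) {z : EucSp n} {s t : ℝ}
    (hs : 0 ≤ s) (hyz : closedBall y s ⊆ closedBall z t) (hsub : closedBall z t ⊆ X) :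
    (ballSup u y s).toReal ≤ (ballSup u z t).toReal :=
  EReal.toReal_le_toReal (ballSup_le_ballSup_of_subset u hyz)
    (h.ballSup_ne_bot hp hs (hyz.trans hsub)) (h.ballSup_lt_top hsub).ne

lemma toReal_ballSup_double_mono (h : HypB p X u) (hp : p < 2) {s t s' t' : ℝ}
    (hs : 0 ≤ s) (hst : s < t) (hss' : s ≤ s') (htt' : t ≤ t') (hst' : s' < t')
    (hsub : closedBall y t' ⊆ X) :
    ((ballSup u y t).toReal - (ballSup u y s).toReal) * (t' ^ (2 - p) - s' ^ (2 - p)) ≤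
      ((ballSup u y t').toReal - (ballSup u y s').toReal) * (t ^ (2 - p) - s ^ (2 - p)) := by
  have hfin : ∀ r, 0 ≤ r → r ≤ t' → ballSup u y r = ((ballSup u y r).toReal : EReal) :=
    fun r hr hrt =>
      have hsub' := (closedBall_subset_closedBall hrt).trans hsub
      (EReal.coe_toReal (h.ballSup_lt_top hsub').ne (h.ballSup_ne_bot hp hr hsub')).symm
  have hK := h.2.2.2.2.2 y (hsub (mem_closedBall_self (by linarith))) s t s' t' hs hst hss'
    htt' hst' hsub
  rw [hfin t (by linarith) htt', hfin s hs (by linarith), hfin t' (by linarith) le_rfl,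
    hfin s' (by linarith) hst'.le] at hK
  exact_mod_cast hK

lemma toReal_sub_le (h : HypB p X u) (hp : p < 2) {x₀ x : EucSp n} {ρ R : ℝ} (hρ : 0 < ρ)
    (hR : 3 * ρ ≤ R) (hsub : closedBall x₀ R ⊆ X) (hx : x ∈ closedBall x₀ ρ)
    (hy : y ∈ closedBall x₀ ρ) (hxy : x ≠ y) :
    ((u x).toReal - (u y).toReal) * ((R - ρ) ^ (2 - p) - ρ ^ (2 - p)) ≤
      ((ballSup u x₀ R).toReal - (u x₀).toReal) * dist x y ^ (2 - p) := by
  have hd : 0 < dist x y := dist_pos.2 hxy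
  have hd2 : dist x y ≤ 2 * ρ :=
    (dist_triangle_right x y x₀).trans (by linarith [mem_closedBall.1 hx, mem_closedBall.1 hy])
  have hsubR : closedBall y (R - ρ) ⊆ closedBall x₀ R :=
    closedBall_subset_closedBall' (by linarith [mem_closedBall.1 hy])
  have hux : (u x).toReal ≤ (ballSup u y (dist x y)).toReal := by
    simpa only [ballSup_zero] using h.toReal_ballSup_le_of_subset hp le_rfl
      (closedBall_subset_closedBall' (by linarith)) ((closedBall_subset_closedBall
        (by linarith)).trans (hsubR.trans hsub))
  have hux₀ : (u x₀).toReal ≤ (ballSup u y ρ).toReal := by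
    simpa only [ballSup_zero] using h.toReal_ballSup_le_of_subset hp le_rfl
      (closedBall_subset_closedBall' (by linarith [mem_closedBall'.1 hy]))
      ((closedBall_subset_closedBall (by linarith)).trans (hsubR.trans hsub))
  have hM : (ballSup u y (R - ρ)).toReal ≤ (ballSup u x₀ R).toReal :=
    h.toReal_ballSup_le_of_subset hp (by linarith) hsubR hsub
  have hK := h.toReal_ballSup_double_mono hp le_rfl hd hρ.le (by linarith) (by linarith)
    (hsubR.trans hsub)
  rw [ballSup_zero, Real.zero_rpow (by linarith), sub_zero] at hK
  have hQ : 0 ≤ (R - ρ) ^ (2 - p) - ρ ^ (2 - p) :=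
    sub_nonneg.2 (Real.rpow_le_rpow hρ.le (by linarith) (by linarith))
  calc ((u x).toReal - (u y).toReal) * ((R - ρ) ^ (2 - p) - ρ ^ (2 - p))
      ≤ ((ballSup u y (dist x y)).toReal - (u y).toReal) * ((R - ρ) ^ (2 - p) - ρ ^ (2 - p)) := by
        gcongr
    _ ≤ ((ballSup u y (R - ρ)).toReal - (ballSup u y ρ).toReal) * dist x y ^ (2 - p) := hK
    _ ≤ ((ballSup u x₀ R).toReal - (u x₀).toReal) * dist x y ^ (2 - p) := by
        gcongr

lemma abs_toReal_sub_le (h : HypB p X u) (hp : p < 2) {x₀ x : EucSp n} {ρ R : ℝ}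
    (hρ : 0 < ρ) (hR : 3 * ρ ≤ R) (hsub : closedBall x₀ R ⊆ X) (hx : x ∈ closedBall x₀ ρ)
    (hy : y ∈ closedBall x₀ ρ) :
    |(u x).toReal - (u y).toReal| * ((R - ρ) ^ (2 - p) - ρ ^ (2 - p)) ≤
      ((ballSup u x₀ R).toReal - (u x₀).toReal) * dist x y ^ (2 - p) := by
  rcases eq_or_ne x y with rfl | hxy
  · simp [dist_self, Real.zero_rpow (show 2 - p ≠ 0 by linarith)]
  rcases abs_cases ((u x).toReal - (u y).toReal) with ⟨habs, -⟩ | ⟨habs, -⟩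
  · rw [habs]
    exact h.toReal_sub_le hp hρ hR hsub hx hy hxy
  · rw [habs, neg_sub, dist_comm]
    exact h.toReal_sub_le hp hρ hR hsub hy hx hxy.symm

end HypB

theorem stmt15_general (n : ℕ) (p : ℝ) (hp2 : p < 2)
    (X : Set (EucSp n)) (u : EucSp n → EReal) (hB : HypB p X u) :
    (∀ x ∈ X, u x ≠ ⊥ ∧ u x ≠ ⊤) ∧
    (∀ x₀ ∈ X, ∃ ε : ℝ, 0 < ε ∧ ∃ C : ℝ,
      ∀ x ∈ Metric.closedBall x₀ ε, ∀ y ∈ Metric.closedBall x₀ ε,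
        |(u x).toReal - (u y).toReal| ≤ C * dist x y ^ (2 - p)) ∧
    (∀ x₀ ∈ X, ∀ ρ R : ℝ, 0 < ρ → 3 * ρ ≤ R → Metric.closedBall x₀ R ⊆ X →
      ∀ x ∈ Metric.closedBall x₀ ρ, ∀ y ∈ Metric.closedBall x₀ ρ, x ≠ y →
        |(u x).toReal - (u y).toReal| / dist x y ^ (2 - p) ≤
          (R ^ (2 - p) / ((R - ρ) ^ (2 - p) - ρ ^ (2 - p))) *
            (((ballSup u x₀ R).toReal - (u x₀).toReal) / R ^ (2 - p))) := by
  have hQ : ∀ ρ R : ℝ, 0 < ρ → 3 * ρ ≤ R → 0 < (R - ρ) ^ (2 - p) - ρ ^ (2 - p) :=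
    fun ρ R hρ hR => sub_pos.2 (Real.rpow_lt_rpow hρ.le (by linarith) (by linarith))
  refine ⟨fun x hx => ⟨hB.ne_bot hp2 hx, (hB.2.2.1 x hx).ne⟩, fun x₀ hx₀ => ?_,
    fun x₀ _ ρ R hρ hR hsub x hx y hy hxy => ?_⟩
  · obtain ⟨R, hR, hsub⟩ := nhds_basis_closedBall.mem_iff.1 (hB.1.mem_nhds hx₀)
    refine ⟨R / 3, by positivity, ((ballSup u x₀ R).toReal - (u x₀).toReal) /
      ((R - R / 3) ^ (2 - p) - (R / 3) ^ (2 - p)), fun x hx y hy => ?_⟩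
    rw [div_mul_eq_mul_div, le_div_iff₀ (hQ _ _ (by positivity) (by linarith))]
    exact hB.abs_toReal_sub_le hp2 (by positivity) (by linarith) hsub hx hy
  · have hRα : 0 < R ^ (2 - p) := Real.rpow_pos_of_pos (by linarith) _
    have hdα : 0 < dist x y ^ (2 - p) := Real.rpow_pos_of_pos (dist_pos.2 hxy) _
    rw [mul_comm, div_mul_div_cancel₀ hRα.ne', div_le_div_iff₀ hdα (hQ ρ R hρ hR)]
    exact hB.abs_toReal_sub_le hp2 hρ hR hsub hx hy

/-- Under Hypothesis B (`1 ≤ p < 2`, `α = 2 − p`), `u` is real-valued and locally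
`α`-Hölder continuous, with the quantitative estimate
`|u(x) − u(y)|/|x−y|^α ≤ [R^α/((R−ρ)^α − ρ^α)] · (M(u,x₀,R) − u(x₀))/R^α`. -/
theorem stmt15 (n : ℕ) (p : ℝ) (hp1 : 1 ≤ p) (hp2 : p < 2)
    (X : Set (EucSp n)) (u : EucSp n → EReal) (hB : HypB p X u) :
    (∀ x ∈ X, u x ≠ ⊥ ∧ u x ≠ ⊤) ∧
    (∀ x₀ ∈ X, ∃ ε : ℝ, 0 < ε ∧ ∃ C : ℝ,
      ∀ x ∈ Metric.closedBall x₀ ε, ∀ y ∈ Metric.closedBall x₀ ε,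
        |(u x).toReal - (u y).toReal| ≤ C * dist x y ^ (2 - p)) ∧
    (∀ x₀ ∈ X, ∀ ρ R : ℝ, 0 < ρ → 3 * ρ ≤ R → Metric.closedBall x₀ R ⊆ X →
      ∀ x ∈ Metric.closedBall x₀ ρ, ∀ y ∈ Metric.closedBall x₀ ρ, x ≠ y →
        |(u x).toReal - (u y).toReal| / dist x y ^ (2 - p) ≤
          (R ^ (2 - p) / ((R - ρ) ^ (2 - p) - ρ ^ (2 - p))) *
            (((ballSup u x₀ R).toReal - (u x₀).toReal) / R ^ (2 - p))) :=
  stmt15_general n p hp2 X u hB
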